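/- arXiv:1302.1978 — 5 statements merged into one kernel-verified Lean document; each statement's English description precedes it below -/
import Mathlib

section
/- A proper function f : X → ℝ∪{+∞} is convex and lower semicontinuous if and only if f = f** restricted to X (biconjugate theorem). -/
/-!
`f** ≤ f` on `X` is the Fenchel–Young inequality, and `f**` restricted to `X` is a supremum of
the continuous affine functions `x ↦ φ x - f* φ`, hence convex and lower semicontinuous.

Conversely, if `f` is convex and lower semicontinuous, its epigraph in `X × ℝ` is closed and
convex, so Hahn–Banach separates any `(x₀, m)` with `m < f x₀` from it by a closed hyperplane.
A non-vertical hyperplane is the graph of an affine minorant of `f` exceeding `m` at `x₀`.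
A vertical one can only occur when `f x₀ = ⊤`; adding a large multiple of it to an affine
minorant, which exists because `f` takes a finite value, again gives such a minorant.
-/

noncomputable section
open NormedSpace

/-- Convexity for extended-real-valued functions. -/
def ERealConvexOn {X : Type*} [AddCommGroup X] [Module ℝ X] (f : X → EReal) : Prop :=
  ∀ x y : X, ∀ a b : ℝ, 0 ≤ a → 0 ≤ b → a + b = 1 →
    f (a • x + b • y) ≤ (a : EReal) * f x + (b : EReal) * f y

/-- The Fenchel conjugate of `f : Y → ℝ ∪ {±∞}` on a normed space `Y`. -/
def fenchelConj {Y : Type*} [NormedAddCommGroup Y] [NormedSpace ℝ Y]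
    (f : Y → EReal) (φ : StrongDual ℝ Y) : EReal :=
  ⨆ x : Y, ((φ x : EReal) - f x)

section Convexity

variable {X : Type*} [AddCommGroup X] [Module ℝ X]

theorem ERealConvexOn.iSup {ι : Sort*} {g : ι → X → EReal} (hg : ∀ i, ERealConvexOn (g i)) :
    ERealConvexOn fun x => ⨆ i, g i x := by
  intro x y a b ha hb hab
  refine iSup_le fun i => (hg i x y a b ha hb hab).trans ?_
  exact add_le_add (mul_le_mul_of_nonneg_left (le_iSup (g · x) i) (EReal.coe_nonneg.2 ha))
    (mul_le_mul_of_nonneg_left (le_iSup (g · y) i) (EReal.coe_nonneg.2 hb))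

theorem erealConvexOn_coe_sub (φ : X →ₗ[ℝ] ℝ) (c : EReal) :
    ERealConvexOn fun x => (φ x : EReal) - c := by
  intro x y a b ha hb hab
  induction c with
  | bot =>
    simp only [EReal.coe_sub_bot]
    rcases ha.eq_or_lt with rfl | ha
    · simp [show b = 1 by linarith]
    · rw [EReal.coe_mul_top_of_pos ha, EReal.top_add_of_ne_bot]
      simp [EReal.mul_ne_bot, hb]
  | top => simp
  | coe r =>
    dsimp only
    rw [← EReal.coe_sub, ← EReal.coe_sub, ← EReal.coe_sub, ← EReal.coe_mul, ← EReal.coe_mul,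
      ← EReal.coe_add, EReal.coe_le_coe_iff, map_add, map_smul, map_smul, smul_eq_mul,
      smul_eq_mul]
    linear_combination r * hab

end Convexity

section Epigraph

variable {X : Type*}

def realEpigraph (f : X → EReal) : Set (X × ℝ) := {p | f p.1 ≤ p.2}

theorem ERealConvexOn.convex_realEpigraph [AddCommGroup X] [Module ℝ X] {f : X → EReal}
    (hf : ERealConvexOn f) : Convex ℝ (realEpigraph f) := by
  intro p hp q hq a b ha hb hab
  calc f (a • p.1 + b • q.1) ≤ (a : EReal) * f p.1 + (b : EReal) * f q.1 :=
        hf p.1 q.1 a b ha hb hab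
    _ ≤ (a : EReal) * p.2 + (b : EReal) * q.2 :=
        add_le_add (mul_le_mul_of_nonneg_left hp (EReal.coe_nonneg.2 ha))
          (mul_le_mul_of_nonneg_left hq (EReal.coe_nonneg.2 hb))
    _ = ((a • p + b • q).2 : ℝ) := by simp

theorem LowerSemicontinuous.isClosed_realEpigraph [TopologicalSpace X] {f : X → EReal}
    (hf : LowerSemicontinuous f) : IsClosed (realEpigraph f) :=
  hf.isClosed_epigraph.preimage
    (continuous_fst.prodMk (continuous_coe_real_ereal.comp continuous_snd))

theorem le_of_forall_mem_realEpigraph {f : X → EReal} {x : X} {a : ℝ}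
    (h : ∀ t : ℝ, (x, t) ∈ realEpigraph f → a ≤ t) : (a : EReal) ≤ f x :=
  EReal.le_of_forall_lt_iff_le.1 fun t ht => EReal.coe_le_coe_iff.2 (h t ht.le)

theorem nonpos_of_forall_mem_realEpigraph_lt {f : X → EReal} {φ : X → ℝ} {c u : ℝ}
    (hsep : ∀ p ∈ realEpigraph f, φ p.1 + c * p.2 < u) {x : X} (hx : f x ≠ ⊤) : c ≤ 0 := by
  by_contra! hc
  set t := max (f x).toReal ((u - φ x) / c)
  have hxt : (x, t) ∈ realEpigraph f :=
    (EReal.le_coe_toReal hx).trans (EReal.coe_le_coe_iff.2 (le_max_left _ _))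
  have ht : u - φ x ≤ c * t := by
    rw [mul_comm, ← div_le_iff₀ hc]; exact le_max_right _ _
  linarith [hsep _ hxt]

end Epigraph

section AffineMinorant

variable {X : Type*} [AddCommGroup X] [TopologicalSpace X] [Module ℝ X] {f : X → EReal}

-- `∀ p ∈ realEpigraph f, φ p.1 - r ≤ p.2` says that `x ↦ φ x - r` is an affine minorant of `f`.

theorem exists_affine_minorant_of_separation {φ : StrongDual ℝ X} {c u : ℝ} (hc : c < 0)
    (hsep : ∀ p ∈ realEpigraph f, φ p.1 + c * p.2 < u) {x₀ : X} {m : ℝ}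
    (hx₀ : u < φ x₀ + c * m) :
    ∃ (φ' : StrongDual ℝ X) (r : ℝ),
      (∀ p ∈ realEpigraph f, φ' p.1 - r ≤ p.2) ∧ m < φ' x₀ - r := by
  have hc' : 0 < -c := neg_pos.2 hc
  refine ⟨(-c)⁻¹ • φ, (-c)⁻¹ * u, fun p hp => ?_, ?_⟩
  · have := hsep p hp
    rw [smul_apply, smul_eq_mul, ← mul_sub, inv_mul_le_iff₀ hc']
    linarith
  · rw [smul_apply, smul_eq_mul, ← mul_sub, lt_inv_mul_iff₀ hc']
    linarith

theorem exists_affine_minorant_of_vertical_separation {φ₀ : StrongDual ℝ X} {r₀ : ℝ}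
    (h₀ : ∀ p ∈ realEpigraph f, φ₀ p.1 - r₀ ≤ p.2) {φ : StrongDual ℝ X} {u : ℝ}
    (hsep : ∀ p ∈ realEpigraph f, φ p.1 < u) {x₀ : X} (hx₀ : u < φ x₀) (m : ℝ) :
    ∃ (φ' : StrongDual ℝ X) (r : ℝ),
      (∀ p ∈ realEpigraph f, φ' p.1 - r ≤ p.2) ∧ m < φ' x₀ - r := by
  obtain ⟨n, hn⟩ := exists_nat_gt ((m - (φ₀ x₀ - r₀)) / (φ x₀ - u))
  refine ⟨φ₀ + (n : ℝ) • φ, r₀ + n * u, fun p hp => ?_, ?_⟩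
  · have := mul_le_mul_of_nonneg_left (hsep p hp).le n.cast_nonneg
    simp only [add_apply, smul_apply, smul_eq_mul]
    linarith [h₀ p hp]
  · rw [div_lt_iff₀ (sub_pos.2 hx₀)] at hn
    simp only [add_apply, smul_apply, smul_eq_mul]
    linarith

variable [IsTopologicalAddGroup X] [ContinuousSMul ℝ X] [LocallyConvexSpace ℝ X]

theorem exists_separation_realEpigraph (hconv : ERealConvexOn f) (hlsc : LowerSemicontinuous f)
    {x₀ : X} {m : ℝ} (hm : (m : EReal) < f x₀) :
    ∃ (φ : StrongDual ℝ X) (c u : ℝ),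
      (∀ p ∈ realEpigraph f, φ p.1 + c * p.2 < u) ∧ u < φ x₀ + c * m := by
  obtain ⟨ψ, u, hsep, hx₀⟩ := geometric_hahn_banach_closed_point hconv.convex_realEpigraph
    hlsc.isClosed_realEpigraph (show (x₀, m) ∉ realEpigraph f from not_le.2 hm)
  have hψ (p : X × ℝ) : ψ p = ψ.comp (.inl ℝ X ℝ) p.1 + ψ (0, 1) * p.2 := by
    rw [← ψ.comp_inl_add_comp_inr p, mul_comm, ← smul_eq_mul, ← map_smul]
    simp
  exact ⟨ψ.comp (.inl ℝ X ℝ), ψ (0, 1), u, fun p hp => (hψ p).symm.trans_lt (hsep p hp),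
    hx₀.trans_eq (hψ _)⟩

theorem exists_affine_minorant (hconv : ERealConvexOn f) (hlsc : LowerSemicontinuous f)
    {x₁ : X} {r₁ : ℝ} (hx₁ : f x₁ = r₁) :
    ∃ (φ : StrongDual ℝ X) (r : ℝ), ∀ p ∈ realEpigraph f, φ p.1 - r ≤ p.2 := by
  obtain ⟨φ, c, u, hsep, hx₁u⟩ :=
    exists_separation_realEpigraph hconv hlsc (hx₁ ▸ EReal.coe_lt_coe_iff.2 (sub_one_lt r₁))
  have hc : c < 0 := by linarith [hsep (x₁, r₁) hx₁.le]
  obtain ⟨φ', r, hφ', -⟩ := exists_affine_minorant_of_separation hc hsep hx₁u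
  exact ⟨φ', r, hφ'⟩

theorem exists_affine_minorant_gt (hconv : ERealConvexOn f) (hlsc : LowerSemicontinuous f)
    {x₁ : X} {r₁ : ℝ} (hx₁ : f x₁ = r₁) {x₀ : X} {m : ℝ} (hm : (m : EReal) < f x₀) :
    ∃ (φ : StrongDual ℝ X) (r : ℝ),
      (∀ p ∈ realEpigraph f, φ p.1 - r ≤ p.2) ∧ m < φ x₀ - r := by
  obtain ⟨φ, c, u, hsep, hx₀⟩ := exists_separation_realEpigraph hconv hlsc hm
  rcases (nonpos_of_forall_mem_realEpigraph_lt hsep (hx₁ ▸ EReal.coe_ne_top r₁)).lt_or_eq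
    with hc | rfl
  · exact exists_affine_minorant_of_separation hc hsep hx₀
  · obtain ⟨φ₀, r₀, h₀⟩ := exists_affine_minorant hconv hlsc hx₁
    exact exists_affine_minorant_of_vertical_separation h₀
      (fun p hp => by simpa using hsep p hp) (by simpa using hx₀) m

end AffineMinorant

theorem EReal.coe_sub_le_of_coe_sub_le {a : ℝ} {b c : EReal} (h : (a : EReal) - b ≤ c) :
    (a : EReal) - c ≤ b := by
  induction b <;> induction c <;> simp_all [← EReal.coe_sub, add_comm]

theorem continuous_coe_sub_ereal (c : EReal) : Continuous fun t : ℝ => (t : EReal) - c := by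
  induction c with
  | bot => simpa only [EReal.coe_sub_bot] using continuous_const
  | top => simpa only [EReal.sub_top] using continuous_const
  | coe r =>
    simp only [← EReal.coe_sub]
    exact continuous_coe_real_ereal.comp (continuous_sub_right r)

section FenchelConj

variable {X : Type*} [NormedAddCommGroup X] [NormedSpace ℝ X]

theorem coe_sub_le_fenchelConj (f : X → EReal) (φ : StrongDual ℝ X) (x : X) :
    (φ x : EReal) - f x ≤ fenchelConj f φ :=
  le_iSup (fun x => (φ x : EReal) - f x) x

theorem fenchelConj_le_coe {f : X → EReal} {φ : StrongDual ℝ X} {r : ℝ}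
    (h : ∀ p ∈ realEpigraph f, φ p.1 - r ≤ p.2) : fenchelConj f φ ≤ r := by
  refine iSup_le fun x => EReal.sub_le_of_le_add' ?_
  have : ((φ x - r : ℝ) : EReal) ≤ f x := le_of_forall_mem_realEpigraph fun t ht => h (x, t) ht
  rwa [EReal.coe_sub, EReal.sub_le_iff_le_add (.inl (EReal.coe_ne_bot r))
    (.inl (EReal.coe_ne_top r))] at this

theorem fenchelConj_fenchelConj_le (f : X → EReal) (x : X) :
    fenchelConj (fenchelConj f) (inclusionInDoubleDual ℝ X x) ≤ f x :=
  iSup_le fun φ => EReal.coe_sub_le_of_coe_sub_le (coe_sub_le_fenchelConj f φ x)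

theorem erealConvexOn_fenchelConj_fenchelConj (f : X → EReal) :
    ERealConvexOn fun x => fenchelConj (fenchelConj f) (inclusionInDoubleDual ℝ X x) :=
  ERealConvexOn.iSup fun φ => erealConvexOn_coe_sub (φ : X →ₗ[ℝ] ℝ) _

theorem lowerSemicontinuous_fenchelConj_fenchelConj (f : X → EReal) :
    LowerSemicontinuous fun x => fenchelConj (fenchelConj f) (inclusionInDoubleDual ℝ X x) :=
  lowerSemicontinuous_iSup fun φ =>
    ((continuous_coe_sub_ereal _).comp φ.continuous).lowerSemicontinuous

theorem le_fenchelConj_fenchelConj {f : X → EReal} (hconv : ERealConvexOn f)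
    (hlsc : LowerSemicontinuous f) {x₁ : X} {r₁ : ℝ} (hx₁ : f x₁ = r₁) (x : X) :
    f x ≤ fenchelConj (fenchelConj f) (inclusionInDoubleDual ℝ X x) := by
  refine EReal.ge_of_forall_gt_iff_ge.1 fun m hm => ?_
  obtain ⟨φ, r, hφ, hm⟩ := exists_affine_minorant_gt hconv hlsc hx₁ hm
  calc (m : EReal) ≤ (φ x : EReal) - r := by exact_mod_cast hm.le
    _ ≤ (φ x : EReal) - fenchelConj f φ := EReal.sub_le_sub le_rfl (fenchelConj_le_coe hφ)
    _ ≤ _ := le_iSup (fun φ : StrongDual ℝ X => (φ x : EReal) - fenchelConj f φ) φ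

end FenchelConj

theorem biconjugate_theorem_general {X : Type*} [NormedAddCommGroup X] [NormedSpace ℝ X]
    (f : X → EReal) (hbot : ∀ x, f x ≠ ⊥) (hproper : ∃ x, f x ≠ ⊤) :
    (ERealConvexOn f ∧ LowerSemicontinuous f) ↔
      ∀ x : X, f x = fenchelConj (fenchelConj f) (inclusionInDoubleDual ℝ X x) := by
  obtain ⟨x₁, hx₁⟩ := hproper
  constructor
  · rintro ⟨hconv, hlsc⟩ x
    exact (le_fenchelConj_fenchelConj hconv hlsc (EReal.coe_toReal hx₁ (hbot x₁)).symm x).antisymm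
      (fenchelConj_fenchelConj_le f x)
  · intro h
    rw [funext h]
    exact ⟨erealConvexOn_fenchelConj_fenchelConj f, lowerSemicontinuous_fenchelConj_fenchelConj f⟩

/-- Biconjugate theorem: a proper function `f : X → ℝ ∪ {+∞}` on a Banach space
is convex and lower semicontinuous if and only if `f = f**|_X`, where `X` is
canonically embedded in `X**`. -/
theorem biconjugate_theorem {X : Type*} [NormedAddCommGroup X] [NormedSpace ℝ X]
    [CompleteSpace X] (f : X → EReal) (hbot : ∀ x, f x ≠ ⊥) (hproper : ∃ x, f x ≠ ⊤) :
    (ERealConvexOn f ∧ LowerSemicontinuous f) ↔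
      ∀ x : X, f x = fenchelConj (fenchelConj f) (inclusionInDoubleDual ℝ X x) :=
  biconjugate_theorem_general f hbot hproper
end
end

section
/- (Sandwich theorem) Let X, Y be Banach spaces, T : X → Y bounded linear, and f : X → ℝ∪{+∞}, g : Y → ℝ∪{+∞} proper convex with f ≥ −g∘T. Assume g is continuous at some point of T(dom f). Then there exist y* ∈ Y* and r ∈ ℝ such that the affine function α(x) = ⟨T*y*, x⟩ + r satisfies f ≥ α ≥ −g∘T on X. -/
/-!
Separate the interior of the epigraph of `g` from the image of the epigraph of `f` under
`(x, t) ↦ (T x, -t)` by Hahn–Banach; the interior is nonempty because `g` is continuous and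
finite at `T x₀`, and the two sets are disjoint because `f ≥ -g ∘ T`. The separating functional
`Φ (y, t)` has a negative `t`-coefficient, since `Φ (T x₀, s) < u ≤ Φ (T x₀, -f x₀)` for every
large `s`. Dividing by that coefficient, the hyperplane `Φ = u` becomes the graph of the affine function `x ↦ ψ (T x) + r`.
-/

noncomputable section
open NormedSpace

open Set Filter Topology

def erealEpigraph {E : Type*} (f : E → EReal) : Set (E × ℝ) := {p | f p.1 ≤ p.2}

section Epigraph

variable {E : Type*} {f : E → EReal}

theorem ERealConvexOn.convex_erealEpigraph [AddCommGroup E] [Module ℝ E]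
    (hf : ERealConvexOn f) : Convex ℝ (erealEpigraph f) := by
  rintro ⟨x₁, t₁⟩ (h₁ : f x₁ ≤ t₁) ⟨x₂, t₂⟩ (h₂ : f x₂ ≤ t₂) a b ha hb hab
  show f (a • x₁ + b • x₂) ≤ ((a * t₁ + b * t₂ : ℝ) : EReal)
  calc f (a • x₁ + b • x₂) ≤ (a : EReal) * f x₁ + (b : EReal) * f x₂ := hf x₁ x₂ a b ha hb hab
    _ ≤ (a : EReal) * t₁ + (b : EReal) * t₂ := by gcongr
    _ = ((a * t₁ + b * t₂ : ℝ) : EReal) := by norm_cast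

variable [TopologicalSpace E]

theorem mem_interior_erealEpigraph {y : E} {s : ℝ} (hf : ContinuousAt f y) (hs : f y < s) :
    (y, s) ∈ interior (erealEpigraph f) := by
  have hfst : Tendsto (fun p : E × ℝ => f p.1) (𝓝 (y, s)) (𝓝 (f y)) :=
    hf.comp continuousAt_fst
  have hsnd : Tendsto (fun p : E × ℝ => (p.2 : EReal)) (𝓝 (y, s)) (𝓝 (s : EReal)) :=
    (continuous_coe_real_ereal.comp continuous_snd).tendsto _
  rw [mem_interior_iff_mem_nhds]
  filter_upwards [hfst.eventually_lt hsnd hs] with p hp using hp.le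

theorem lt_of_mem_interior_erealEpigraph {p : E × ℝ} (hp : p ∈ interior (erealEpigraph f)) :
    f p.1 < p.2 := by
  have hvert : ∀ᶠ t in 𝓝 p.2, (p.1, t) ∈ erealEpigraph f :=
    (Continuous.prodMk_right p.1).continuousAt.preimage_mem_nhds
      (mem_interior_iff_mem_nhds.1 hp)
  obtain ⟨t, ht, hft⟩ := hvert.exists_lt
  exact hft.trans_lt (by exact_mod_cast ht)

end Epigraph

section Sandwich

variable {X Y : Type*} [TopologicalSpace X] [AddCommGroup X] [Module ℝ X]
  [TopologicalSpace Y] [AddCommGroup Y] [IsTopologicalAddGroup Y] [Module ℝ Y]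
  [ContinuousSMul ℝ Y]
  (T : X →L[ℝ] Y) {f : X → EReal} {g : Y → EReal} {x₀ : X}

theorem exists_separation_erealEpigraph (hf : ERealConvexOn f) (hg : ERealConvexOn g)
    (hfg : ∀ x, -g (T x) ≤ f x) (hfx₀ : f x₀ ≠ ⊤) (hgx₀ : g (T x₀) ≠ ⊤)
    (hgc : ContinuousAt g (T x₀)) :
    ∃ (Φ : StrongDual ℝ (Y × ℝ)) (u : ℝ), Φ (0, 1) < 0 ∧
      (∀ q ∈ erealEpigraph g, Φ q ≤ u) ∧ ∀ p ∈ erealEpigraph f, u ≤ Φ (T p.1, -p.2) := by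
  set L : X × ℝ →L[ℝ] Y × ℝ := T.prodMap (-ContinuousLinearMap.id ℝ ℝ)
  have hdisj : Disjoint (interior (erealEpigraph g)) (L '' erealEpigraph f) := by
    rw [disjoint_left]
    rintro _ hq ⟨⟨x, t⟩, hft : f x ≤ t, rfl⟩
    have hgt : g (T x) < ((-t : ℝ) : EReal) := lt_of_mem_interior_erealEpigraph hq
    rw [EReal.coe_neg, EReal.lt_neg_comm] at hgt
    exact (hgt.trans_le ((hfg x).trans hft)).false
  obtain ⟨Φ, u, hΦg, hΦf⟩ := geometric_hahn_banach_open hg.convex_erealEpigraph.interior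
    isOpen_interior (hf.convex_erealEpigraph.linear_image L.toLinearMap) hdisj
  obtain ⟨s₀, hs₀, -⟩ := EReal.exists_between_coe_real (lt_top_iff_ne_top.2 hgx₀)
  have hray : ∀ s ≥ s₀, (T x₀, s) ∈ interior (erealEpigraph g) := fun s hs =>
    mem_interior_erealEpigraph hgc (hs₀.trans_le (by exact_mod_cast hs))
  refine ⟨Φ, u, ?_, fun q hq => ?_, fun p hp => hΦf _ (mem_image_of_mem L hp)⟩
  · set t₀ := (f x₀).toReal
    set s := max s₀ (1 - t₀)
    have hf₀ : u ≤ Φ (T x₀, -t₀) :=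
      hΦf _ (mem_image_of_mem L (show (x₀, t₀) ∈ erealEpigraph f from EReal.le_coe_toReal hfx₀))
    have hg₀ : Φ (T x₀, s) < u := hΦg _ (hray s (le_max_left _ _))
    have hdiff : Φ (T x₀, s) - Φ (T x₀, -t₀) = (s + t₀) * Φ (0, 1) := by
      rw [← map_sub, ← smul_eq_mul, ← map_smul]
      congr 1
      ext <;> simp
    have hpos : 0 < s + t₀ := by linarith [le_max_right s₀ (1 - t₀)]
    exact neg_of_mul_neg_right (by linarith) hpos.le
  · have hne : (interior (erealEpigraph g)).Nonempty := ⟨_, hray s₀ le_rfl⟩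
    refine closure_minimal (fun p hp => (hΦg p hp).le) (isClosed_Iic.preimage Φ.continuous) ?_
    rw [hg.convex_erealEpigraph.closure_interior_eq_closure_of_nonempty_interior hne]
    exact subset_closure hq

theorem exists_affine_between_erealEpigraph (hf : ERealConvexOn f) (hg : ERealConvexOn g)
    (hfg : ∀ x, -g (T x) ≤ f x) (hfx₀ : f x₀ ≠ ⊤) (hgx₀ : g (T x₀) ≠ ⊤)
    (hgc : ContinuousAt g (T x₀)) :
    ∃ (ψ : StrongDual ℝ Y) (r : ℝ), (∀ p ∈ erealEpigraph f, ψ (T p.1) + r ≤ p.2) ∧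
      ∀ q ∈ erealEpigraph g, -q.2 ≤ ψ q.1 + r := by
  obtain ⟨Φ, u, hc, hΦg, hΦf⟩ := exists_separation_erealEpigraph T hf hg hfg hfx₀ hgx₀ hgc
  set c := Φ (0, 1)
  set ψ : StrongDual ℝ Y := c⁻¹ • Φ.comp (ContinuousLinearMap.inl ℝ Y ℝ)
  have hΦ : ∀ y t, Φ (y, t) = c * (ψ y + t) := by
    intro y t
    have hyt : ((y, t) : Y × ℝ) = (y, 0) + t • ((0 : Y), (1 : ℝ)) := by ext <;> simp
    rw [hyt, map_add, map_smul, smul_eq_mul]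
    change Φ (y, 0) + t * c = c * (c⁻¹ * Φ (y, 0) + t)
    field_simp [hc.ne]
  refine ⟨ψ, -u / c, fun p hp => ?_, fun q hq => ?_⟩
  · have h := hΦf p hp
    rw [hΦ, ← le_div_iff_of_neg' hc] at h
    linarith [neg_div c u]
  · have h := hΦg q hq
    rw [hΦ, ← div_le_iff_of_neg' hc] at h
    linarith [neg_div c u]

end Sandwich

theorem sandwich_theorem_general {X Y : Type*} [NormedAddCommGroup X] [NormedSpace ℝ X]
    [NormedAddCommGroup Y] [NormedSpace ℝ Y]
    (T : X →L[ℝ] Y) (f : X → EReal) (g : Y → EReal)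
    (hfconv : ERealConvexOn f) (hgconv : ERealConvexOn g)
    (hge : ∀ x : X, -g (T x) ≤ f x)
    (hcq : ∃ x₀ : X, f x₀ ≠ ⊤ ∧ g (T x₀) ≠ ⊤ ∧ ContinuousAt g (T x₀)) :
    ∃ (ψ : StrongDual ℝ Y) (r : ℝ), ∀ x : X,
      ((ψ (T x) + r : ℝ) : EReal) ≤ f x ∧ -g (T x) ≤ ((ψ (T x) + r : ℝ) : EReal) := by
  obtain ⟨x₀, hfx₀, hgx₀, hgc⟩ := hcq
  obtain ⟨ψ, r, hf, hg⟩ := exists_affine_between_erealEpigraph T hfconv hgconv hge hfx₀ hgx₀ hgc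
  refine ⟨ψ, r, fun x => ⟨?_, ?_⟩⟩
  · refine EReal.le_of_forall_lt_iff_le.1 fun t ht => ?_
    exact_mod_cast hf (x, t) ht.le
  · rw [EReal.neg_le, ← EReal.coe_neg]
    refine EReal.le_of_forall_lt_iff_le.1 fun t ht => ?_
    exact_mod_cast neg_le.1 (hg (T x, t) ht.le)

/-- Sandwich theorem: if `f : X → ℝ ∪ {+∞}` and `g : Y → ℝ ∪ {+∞}` are proper convex,
`T : X → Y` is bounded linear, `f ≥ −g∘T`, and `g` is continuous (and finite) at some
point of `T(dom f)`, then there is an affine function `α(x) = ⟨T*y*, x⟩ + r` with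
`f ≥ α ≥ −g∘T`. -/
theorem sandwich_theorem {X Y : Type*} [NormedAddCommGroup X] [NormedSpace ℝ X]
    [CompleteSpace X] [NormedAddCommGroup Y] [NormedSpace ℝ Y] [CompleteSpace Y]
    (T : X →L[ℝ] Y) (f : X → EReal) (g : Y → EReal)
    (hfbot : ∀ x, f x ≠ ⊥) (hgbot : ∀ y, g y ≠ ⊥)
    (hfproper : ∃ x, f x ≠ ⊤) (hgproper : ∃ y, g y ≠ ⊤)
    (hfconv : ERealConvexOn f) (hgconv : ERealConvexOn g)
    (hge : ∀ x : X, -g (T x) ≤ f x)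
    (hcq : ∃ x₀ : X, f x₀ ≠ ⊤ ∧ g (T x₀) ≠ ⊤ ∧ ContinuousAt g (T x₀)) :
    ∃ (ψ : StrongDual ℝ Y) (r : ℝ), ∀ x : X,
      ((ψ (T x) + r : ℝ) : EReal) ≤ f x ∧ -g (T x) ≤ ((ψ (T x) + r : ℝ) : EReal) :=
  sandwich_theorem_general T f g hfconv hgconv hge hcq
end
end

section
/- Let C be a nonempty weakly closed subset of a real Hilbert space H. Then C is convex if and only if C is a Chebyshev set, i.e., for each x ∈ H there is exactly one nearest point in C. -/
/-!
Convex ⇒ Chebyshev is the Hilbert projection theorem; uniqueness comes from the parallelogram law.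

Conversely, let `P` be the nearest-point map of a weakly closed Chebyshev set `C`. Closed balls are
weakly compact, so a minimizing sequence for the distance from `x` to `C` has weak cluster points,
all equal to `P x`; since its norms converge too, it converges strongly to `P x`. Hence `P` is
continuous, and then `d_C²` is Fréchet differentiable with gradient `2 (x - P x)`.
If `y = s a + t b` with `a, b ∈ C`, then `d_C(x)² - ‖x - y‖² ≤ s t ‖a - b‖²` for every `x`. So for
`ε > 0` the function `(1 + ε) ‖x - y‖² - d_C(x)²` is bounded below and strongly midpoint convex
and has a minimizer `x₀`, whose first-order condition reads `P x₀ - y = -ε (x₀ - y)`. Comparing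
its value at `x₀` with the one at `y` gives `d_C(y)² ≤ ε s t ‖a - b‖²`, and `ε → 0` gives `y ∈ C`.
-/

open Metric Filter Topology RealInnerProductSpace

section WeakTopology

variable {E : Type*} [NormedAddCommGroup E] [NormedSpace ℝ E]

lemma isClosed_of_isClosed_weakSpace {s : Set E} (hs : IsClosed (X := WeakSpace ℝ E) s) :
    IsClosed s :=
  hs.preimage (toWeakSpaceCLM ℝ E).continuous

lemma Convex.isClosed_weakSpace {s : Set E} (hs : Convex ℝ s) (hc : IsClosed s) :
    IsClosed (X := WeakSpace ℝ E) s := by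
  have := hs.toWeakSpace_closure ℝ
  have himage : (toWeakSpace ℝ E '' s : Set (WeakSpace ℝ E)) = s := Set.image_id' s
  rw [hc.closure_eq, himage] at this
  exact closure_eq_iff_isClosed.mp this.symm

end WeakTopology

section StrongMidpointConvex

variable {E : Type*} [NormedAddCommGroup E] [NormedSpace ℝ E] [CompleteSpace E]

theorem exists_forall_le_of_strongMidpointConvex {f : E → ℝ} (hf : Continuous f)
    (hbdd : BddBelow (Set.range f)) {μ : ℝ} (hμ : 0 < μ)
    (hmid : ∀ a b, f (midpoint ℝ a b) + μ * dist a b ^ 2 ≤ (f a + f b) / 2) :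
    ∃ x, ∀ z, f x ≤ f z := by
  set m := ⨅ x, f x
  have hm (x : E) : m ≤ f x := ciInf_le hbdd x
  have happrox (n : ℕ) : ∃ x, f x < m + 1 / (n + 1) :=
    exists_lt_of_ciInf_lt (lt_add_of_pos_right m Nat.one_div_pos_of_nat)
  choose u hu using happrox
  have hcauchy : CauchySeq u := by
    refine Metric.cauchySeq_iff'.2 fun ε hε => ?_
    obtain ⟨N, hN⟩ := exists_nat_one_div_lt (mul_pos hμ (pow_pos hε 2))
    refine ⟨N, fun n hn => lt_of_pow_lt_pow_left₀ 2 hε.le ?_⟩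
    have hn' : 1 / (n + 1 : ℝ) ≤ 1 / (N + 1) := Nat.one_div_le_one_div hn
    nlinarith [hmid (u n) (u N), hm (midpoint ℝ (u n) (u N)), hu n, hu N]
  obtain ⟨x, hx⟩ := cauchySeq_tendsto_of_complete hcauchy
  refine ⟨x, fun z => le_trans ?_ (hm z)⟩
  have hlim : Tendsto (fun n : ℕ => m + 1 / (n + 1)) atTop (𝓝 m) := by
    simpa using tendsto_one_div_add_atTop_nhds_zero_nat.const_add m
  exact le_of_tendsto_of_tendsto' ((hf.tendsto x).comp hx) hlim fun n => (hu n).le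

end StrongMidpointConvex

section InfDist

variable {α : Type*} [PseudoMetricSpace α] {C : Set α}

lemma infDist_sq_le_dist_sq {c : α} (hc : c ∈ C) (x : α) : infDist x C ^ 2 ≤ dist x c ^ 2 :=
  pow_le_pow_left₀ infDist_nonneg (infDist_le_dist_of_mem hc) 2

lemma le_infDist_sq (hne : C.Nonempty) {x : α} {K : ℝ} (h : ∀ c ∈ C, K ≤ dist x c ^ 2) :
    K ≤ infDist x C ^ 2 :=
  (Real.sqrt_le_left infDist_nonneg).1 <|
    (le_infDist hne).2 fun c hc => (Real.sqrt_le_left dist_nonneg).2 (h c hc)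

end InfDist

section Hilbert

variable {H : Type*} [NormedAddCommGroup H] [InnerProductSpace ℝ H]

lemma dist_midpoint_sq (a b y : H) :
    dist (midpoint ℝ a b) y ^ 2 = (dist a y ^ 2 + dist b y ^ 2) / 2 - dist a b ^ 2 / 4 := by
  have := EuclideanGeometry.dist_sq_add_dist_sq_eq_two_mul_dist_midpoint_sq_add_half_dist_sq y a b
  rw [dist_comm y, dist_comm y, dist_comm y] at this
  linarith

lemma dist_sq_convex_combination (a b x : H) {s t : ℝ} (hst : s + t = 1) :
    s * dist x a ^ 2 + t * dist x b ^ 2 = dist x (s • a + t • b) ^ 2 + s * t * dist a b ^ 2 := by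
  obtain rfl : s = 1 - t := by linarith
  have ha : x - a = (x - ((1 - t) • a + t • b)) + t • (b - a) := by module
  have hb : x - b = (x - ((1 - t) • a + t • b)) - (1 - t) • (b - a) := by module
  rw [dist_eq_norm, dist_eq_norm, dist_eq_norm, dist_eq_norm, ha, hb, norm_sub_rev a b]
  generalize x - ((1 - t) • a + t • b) = u
  generalize b - a = v
  rw [norm_add_sq_real, norm_sub_sq_real, inner_smul_right, inner_smul_right, norm_smul,
    norm_smul, Real.norm_eq_abs, Real.norm_eq_abs, mul_pow, mul_pow, sq_abs, sq_abs]
  ring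

theorem Convex.existsUnique_dist_eq_infDist {C : Set H} (hconv : Convex ℝ C) (hne : C.Nonempty)
    (hcomplete : IsComplete C) (x : H) : ∃! v : H, v ∈ C ∧ dist v x = infDist x C := by
  obtain ⟨v, hv, hvx⟩ := exists_norm_eq_iInf_of_complete_convex hne hcomplete hconv x
  have hiInf : ⨅ w : C, ‖x - w‖ = infDist x C := by
    simp only [infDist_eq_iInf, dist_eq_norm]
  have hvx' : dist v x = infDist x C := by rw [dist_comm, dist_eq_norm, hvx, hiInf]
  refine ⟨v, ⟨hv, hvx'⟩, fun w ⟨hw, hwx⟩ => dist_le_zero.1 ?_⟩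
  have hmid := infDist_sq_le_dist_sq (hconv.midpoint_mem hw hv) x
  rw [dist_comm, dist_midpoint_sq, hwx, hvx'] at hmid
  nlinarith

lemma isCompact_weakSpace_closedBall [CompleteSpace H] (c : H) (r : ℝ) :
    IsCompact (X := WeakSpace ℝ H) (closedBall c r : Set H) := by
  -- By Riesz, `D.symm` is continuous from the weak-* to the weak topology: apply Banach–Alaoglu.
  let D := InnerProductSpace.toDual ℝ H
  let φ : WeakDual ℝ H → WeakSpace ℝ H := fun f => toWeakSpace ℝ H (D.symm f.toStrongDual)
  have hφ : Continuous φ := by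
    refine WeakBilin.continuous_of_continuous_eval _ fun L => ?_
    convert WeakDual.eval_continuous (D.symm L) using 2 with f
    show L (D.symm f.toStrongDual) = f.toStrongDual (D.symm L)
    rw [← InnerProductSpace.toDual_symm_apply, ← InnerProductSpace.toDual_symm_apply,
      real_inner_comm]
  have hsurj : WeakDual.toStrongDual '' (WeakDual.toStrongDual ⁻¹' closedBall (D c) r) =
      closedBall (D c) r := (WeakDual.toStrongDual (𝕜 := ℝ) (E := H)).toEquiv.image_preimage _
  have himage :
      φ '' (WeakDual.toStrongDual ⁻¹' closedBall (D c) r) = (closedBall c r : Set H) := by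
    rw [← D.symm_apply_apply c, ← D.symm.image_closedBall, ← hsurj, Set.image_image,
      D.apply_symm_apply]
    rfl
  exact himage ▸ (WeakDual.isCompact_closedBall (D c) r).image hφ

lemma tendsto_of_tendsto_inner_of_tendsto_norm {ι : Type*} {l : Filter ι} {q : ι → H} {p : H}
    (hinner : Tendsto (fun i => ⟪q i, p⟫) l (𝓝 ⟪p, p⟫))
    (hnorm : Tendsto (fun i => ‖q i‖) l (𝓝 ‖p‖)) :
    Tendsto q l (𝓝 p) := by
  have hsq : Tendsto (fun i => ‖q i - p‖ ^ 2) l (𝓝 0) := by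
    convert ((hnorm.pow 2).sub (hinner.const_mul 2)).add_const (‖p‖ ^ 2) using 1
    · exact funext fun i => norm_sub_sq_real _ _
    · rw [real_inner_self_eq_norm_sq]
      congr 1
      ring
  rw [tendsto_iff_norm_sub_tendsto_zero]
  simpa using hsq.sqrt

theorem tendsto_of_tendsto_dist_infDist [CompleteSpace H] {C : Set H}
    (hC : IsClosed (X := WeakSpace ℝ H) C) {a p : H} (hp : p ∈ C ∧ dist p a = infDist a C)
    (huniq : ∀ v, v ∈ C ∧ dist v a = infDist a C → v = p)
    {ι : Type*} {l : Filter ι} {q : ι → H} (hq : ∀ᶠ i in l, q i ∈ C)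
    (hdist : Tendsto (fun i => dist (q i) a) l (𝓝 (infDist a C))) :
    Tendsto q l (𝓝 p) := by
  set d := infDist a C
  have hball (ε : ℝ) (hε : 0 < ε) : ∀ᶠ i in l, q i ∈ C ∩ closedBall a (d + ε) :=
    hq.and (hdist.eventually (eventually_le_nhds (lt_add_of_pos_right d hε)))
  have hweak : Tendsto (fun i => toWeakSpace ℝ H (q i)) l (𝓝 (toWeakSpace ℝ H p)) := by
    refine ((isCompact_weakSpace_closedBall a (d + 1)).inter_left hC
      ).tendsto_nhds_of_unique_mapClusterPt (hball 1 one_pos) fun x _ hx => ?_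
    obtain ⟨x, rfl⟩ := (toWeakSpace ℝ H).surjective x
    refine congrArg _ ?_
    have hxC : x ∈ C := hC.mem_of_mapClusterPt hx hq
    refine huniq x ⟨hxC, le_antisymm (le_of_forall_pos_le_add fun ε hε => ?_) ?_⟩
    · exact ((convex_closedBall a (d + ε)).isClosed_weakSpace isClosed_closedBall
        ).mem_of_mapClusterPt hx ((hball ε hε).mono fun _ h => h.2)
    · rw [dist_comm]
      exact infDist_le_dist_of_mem hxC
  have hinner : Tendsto (fun i => ⟪q i - a, p - a⟫) l (𝓝 ⟪p - a, p - a⟫) := by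
    have hcont : Continuous fun z : WeakSpace ℝ H => ⟪p - a, (toWeakSpace ℝ H).symm z⟫ :=
      WeakBilin.eval_continuous _ (InnerProductSpace.toDual ℝ H (p - a))
    simp only [inner_sub_left _ _ (p - a), real_inner_comm (p - a)]
    exact (((hcont.tendsto _).comp hweak).sub_const _)
  have hnorm : Tendsto (fun i => ‖q i - a‖) l (𝓝 ‖p - a‖) := by
    simpa only [← dist_eq_norm, hp.2] using hdist
  simpa using (tendsto_of_tendsto_inner_of_tendsto_norm hinner hnorm).add_const a

theorem continuous_of_forall_dist_eq_infDist [CompleteSpace H] {C : Set H}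
    (hC : IsClosed (X := WeakSpace ℝ H) C) {P : H → H}
    (hP : ∀ x, P x ∈ C ∧ dist (P x) x = infDist x C)
    (huniq : ∀ x v, v ∈ C ∧ dist v x = infDist x C → v = P x) : Continuous P := by
  refine continuous_iff_continuousAt.2 fun x => tendsto_of_tendsto_dist_infDist hC (hP x)
    (huniq x) (Eventually.of_forall fun z => (hP z).1) ?_
  have hlow (z : H) : infDist x C ≤ dist (P z) x := by
    rw [dist_comm]
    exact infDist_le_dist_of_mem (hP z).1
  have hup (z : H) : dist (P z) x ≤ infDist z C + dist z x :=
    (hP z).2 ▸ dist_triangle _ _ _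
  have hcont : Continuous fun z => infDist z C + dist z x :=
    (continuous_infDist_pt C).add (continuous_id.dist continuous_const)
  have hlim : Tendsto (fun z => infDist z C + dist z x) (𝓝 x) (𝓝 (infDist x C)) := by
    simpa using hcont.tendsto x
  exact tendsto_of_tendsto_of_tendsto_of_le_of_le tendsto_const_nhds hlim hlow hup

theorem hasFDerivAt_infDist_sq {C : Set H} {P : H → H}
    (hP : ∀ x, P x ∈ C ∧ dist (P x) x = infDist x C) {x₀ : H} (hcont : ContinuousAt P x₀) :
    HasFDerivAt (fun x => infDist x C ^ 2) ((2 : ℝ) • innerSL ℝ (x₀ - P x₀)) x₀ := by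
  set u := x₀ - P x₀ with hu
  set e : H → H := fun h => P (x₀ + h) - P x₀
  have he : Tendsto (fun h => ‖h‖ + 2 * ‖e h‖) (𝓝 0) (𝓝 0) := by
    have hshift : Tendsto (fun h : H => x₀ + h) (𝓝 0) (𝓝 x₀) :=
      (continuous_const_add x₀).tendsto' 0 x₀ (add_zero x₀)
    have : Tendsto e (𝓝 0) (𝓝 0) := by
      simpa [e] using (hcont.tendsto.comp hshift).sub_const (P x₀)
    simpa using tendsto_norm_zero.add (this.norm.const_mul 2)
  have hbound (h : H) :
      |infDist (x₀ + h) C ^ 2 - infDist x₀ C ^ 2 - 2 * ⟪u, h⟫| ≤ ‖h‖ * (‖h‖ + 2 * ‖e h‖) := by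
    have hsq (x : H) : infDist x C ^ 2 = ‖x - P x‖ ^ 2 := by
      rw [← (hP x).2, dist_comm, dist_eq_norm]
    have hupper := infDist_sq_le_dist_sq (hP x₀).1 (x₀ + h)
    have hlower := infDist_sq_le_dist_sq (hP (x₀ + h)).1 x₀
    have hz : x₀ + h - P (x₀ + h) = h + (u - e h) := by simp only [u, e]; abel
    rw [hsq, hz, dist_eq_norm, show x₀ + h - P x₀ = h + u by rw [hu]; abel] at hupper
    rw [hsq, dist_eq_norm, show x₀ - P (x₀ + h) = u - e h by simp only [u, e]; abel] at hlower
    rw [hsq, hsq, hz, ← hu]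
    rw [← hu] at hlower
    have e1 : ‖h + (u - e h)‖ ^ 2 = ‖h‖ ^ 2 + 2 * ⟪h, u⟫ - 2 * ⟪h, e h⟫ + ‖u - e h‖ ^ 2 := by
      rw [norm_add_sq_real, inner_sub_right]; ring
    have e2 : ‖h + u‖ ^ 2 = ‖h‖ ^ 2 + 2 * ⟪h, u⟫ + ‖u‖ ^ 2 := norm_add_sq_real _ _
    have hcs : ⟪h, e h⟫ ≤ ‖h‖ * ‖e h‖ := real_inner_le_norm _ _
    rw [real_inner_comm h u, abs_le]
    constructor <;> nlinarith [norm_nonneg h, norm_nonneg (e h)]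
  rw [hasFDerivAt_iff_isLittleO_nhds_zero, Asymptotics.isLittleO_iff]
  intro c hc
  filter_upwards [he.eventually (ge_mem_nhds hc)] with h hh
  calc ‖infDist (x₀ + h) C ^ 2 - infDist x₀ C ^ 2 - ((2 : ℝ) • innerSL ℝ u) h‖
      = |infDist (x₀ + h) C ^ 2 - infDist x₀ C ^ 2 - 2 * ⟪u, h⟫| := by simp
    _ ≤ ‖h‖ * (‖h‖ + 2 * ‖e h‖) := hbound h
    _ ≤ c * ‖h‖ := by rw [mul_comm]; exact mul_le_mul_of_nonneg_right hh (norm_nonneg h)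

theorem IsLocalMin.smul_sub_eq_sub_nearest {C : Set H} {P : H → H}
    (hP : ∀ x, P x ∈ C ∧ dist (P x) x = infDist x C) {c : ℝ} {y x₀ : H}
    (hmin : IsLocalMin (fun x => c * dist x y ^ 2 - infDist x C ^ 2) x₀)
    (hcont : ContinuousAt P x₀) :
    c • (x₀ - y) = x₀ - P x₀ := by
  have hderiv := ((((hasFDerivAt_id x₀).sub_const y).norm_sq).const_mul c).sub
    (hasFDerivAt_infDist_sq hP hcont)
  simp only [← dist_eq_norm] at hderiv
  have hzero := congrArg (· (c • (x₀ - y) - (x₀ - P x₀))) (hmin.hasFDerivAt_eq_zero hderiv)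
  simp only [sub_apply, smul_apply, ContinuousLinearMap.comp_apply, innerSL_apply_apply,
    ContinuousLinearMap.id_apply, zero_apply, id, smul_eq_mul, nsmul_eq_mul,
    Nat.cast_ofNat] at hzero
  have hsq : ⟪c • (x₀ - y) - (x₀ - P x₀), c • (x₀ - y) - (x₀ - P x₀)⟫ = 0 := by
    rw [inner_sub_left, real_inner_smul_left]
    linarith
  exact sub_eq_zero.1 (inner_self_eq_zero.1 hsq)

lemma dist_sq_sub_infDist_sq_midpoint_le {C : Set H} (hne : C.Nonempty) (y a b : H) :
    dist (midpoint ℝ a b) y ^ 2 - infDist (midpoint ℝ a b) C ^ 2 ≤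
      ((dist a y ^ 2 - infDist a C ^ 2) + (dist b y ^ 2 - infDist b C ^ 2)) / 2 := by
  suffices h : dist (midpoint ℝ a b) y ^ 2
      + ((infDist a C ^ 2 - dist a y ^ 2) + (infDist b C ^ 2 - dist b y ^ 2)) / 2
      ≤ infDist (midpoint ℝ a b) C ^ 2 by linarith
  refine le_infDist_sq hne fun c hc => ?_
  rw [dist_midpoint_sq a b y, dist_midpoint_sq a b c]
  linarith [infDist_sq_le_dist_sq hc a, infDist_sq_le_dist_sq hc b]

lemma infDist_sq_sub_dist_sq_le {C : Set H} {a b : H} (ha : a ∈ C) (hb : b ∈ C) {s t : ℝ}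
    (hs : 0 ≤ s) (ht : 0 ≤ t) (hst : s + t = 1) (x : H) :
    infDist x C ^ 2 - dist x (s • a + t • b) ^ 2 ≤ s * t * dist a b ^ 2 := by
  have := dist_sq_convex_combination a b x hst
  nlinarith [infDist_sq_le_dist_sq ha x, infDist_sq_le_dist_sq hb x]

theorem infDist_sq_le_mul_of_continuous_nearest {C : Set H} [CompleteSpace H] {P : H → H}
    (hP : ∀ x, P x ∈ C ∧ dist (P x) x = infDist x C) (hPcont : Continuous P) {y : H} {M : ℝ}
    (hM : ∀ x, infDist x C ^ 2 - dist x y ^ 2 ≤ M) {ε : ℝ} (hε : 0 < ε) :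
    infDist y C ^ 2 ≤ ε * M := by
  set F : H → ℝ := fun x => (1 + ε) * dist x y ^ 2 - infDist x C ^ 2
  have hFlow (x : H) : ε * dist x y ^ 2 - M ≤ F x := by linarith [hM x]
  have hFmid (a b : H) : F (midpoint ℝ a b) + ε / 4 * dist a b ^ 2 ≤ (F a + F b) / 2 := by
    have := dist_midpoint_sq a b y
    nlinarith [dist_sq_sub_infDist_sq_midpoint_le ⟨P y, (hP y).1⟩ y a b]
  have hFcont : Continuous F := by fun_prop
  obtain ⟨x₀, hx₀⟩ := exists_forall_le_of_strongMidpointConvex hFcont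
    ⟨-M, by rintro _ ⟨x, rfl⟩; nlinarith [hFlow x]⟩ (by positivity) hFmid
  have heq := IsLocalMin.smul_sub_eq_sub_nearest hP (Eventually.of_forall hx₀)
    hPcont.continuousAt
  have hnearest : dist y (P x₀) = ε * dist x₀ y := by
    rw [dist_eq_norm, dist_eq_norm, show y - P x₀ = ε • (x₀ - y) by
      rw [show P x₀ = x₀ - (1 + ε) • (x₀ - y) by rw [heq]; abel]; module, norm_smul,
      Real.norm_of_nonneg hε.le]
  have hx₀y : ε * dist x₀ y ^ 2 ≤ M := by
    have := hx₀ y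
    simp only [F, dist_self] at this
    nlinarith [hFlow x₀, sq_nonneg (infDist y C)]
  calc infDist y C ^ 2 ≤ dist y (P x₀) ^ 2 := infDist_sq_le_dist_sq (hP x₀).1 y
    _ = ε * (ε * dist x₀ y ^ 2) := by rw [hnearest]; ring
    _ ≤ ε * M := mul_le_mul_of_nonneg_left hx₀y hε.le

theorem mem_of_forall_infDist_sq_sub_dist_sq_le [CompleteSpace H] {C : Set H}
    (hC : IsClosed (X := WeakSpace ℝ H) C)
    (hcheb : ∀ x : H, ∃! v : H, v ∈ C ∧ dist v x = infDist x C) {y : H} {M : ℝ}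
    (hM : ∀ x, infDist x C ^ 2 - dist x y ^ 2 ≤ M) : y ∈ C := by
  choose P hP huniq using hcheb
  have hPcont := continuous_of_forall_dist_eq_infDist hC hP huniq
  have hlim : Tendsto (fun ε => ε * M) (𝓝[>] 0) (𝓝 0) := by
    simpa using ((continuous_mul_const M).tendsto 0).mono_left nhdsWithin_le_nhds
  have hsq : infDist y C ^ 2 ≤ 0 := ge_of_tendsto hlim <| eventually_nhdsWithin_of_forall
    fun ε hε => infDist_sq_le_mul_of_continuous_nearest hP hPcont hM hε
  have hzero : infDist y C = 0 := pow_eq_zero_iff two_ne_zero |>.1 (hsq.antisymm (sq_nonneg _))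
  rw [← (isClosed_of_isClosed_weakSpace hC).closure_eq]
  exact (mem_closure_iff_infDist_zero ⟨P y, (hP y).1⟩).2 hzero

end Hilbert

/-- A nonempty weakly closed subset of a real Hilbert space is convex if and only if it
is a Chebyshev set (every point has exactly one nearest point in the set). -/
theorem weakly_closed_convex_iff_chebyshev {H : Type*} [NormedAddCommGroup H]
    [InnerProductSpace ℝ H] [CompleteSpace H] (C : Set H) (hne : C.Nonempty)
    (hC : IsClosed (X := WeakSpace ℝ H) C) :
    Convex ℝ C ↔ ∀ x : H, ∃! v : H, v ∈ C ∧ dist v x = Metric.infDist x C := by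
  refine ⟨fun hconv => hconv.existsUnique_dist_eq_infDist hne
    (isClosed_of_isClosed_weakSpace hC).isComplete, fun hcheb => ?_⟩
  intro a ha b hb s t hs ht hst
  exact mem_of_forall_infDist_sq_sub_dist_sq_le hC hcheb
    (infDist_sq_sub_dist_sq_le ha hb hs ht hst)
end

section
/- (Fitzpatrick) Let A : X ⇉ X* be a maximally monotone operator. Then for every (x, x*) ∈ X × X*, ⟨x, x*⟩ ≤ F_A(x, x*), where F_A is the Fitzpatrick function, and equality holds if and only if (x, x*) ∈ gra A. Moreover F_A is convex and proper. -/
noncomputable section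
open NormedSpace

variable {X : Type*} [NormedAddCommGroup X] [NormedSpace ℝ X]

/-- A set-valued operator `A : X ⇉ X*`, given by its graph, is monotone. -/
def MonotoneGraph (A : Set (X × StrongDual ℝ X)) : Prop :=
  ∀ a ∈ A, ∀ b ∈ A, 0 ≤ (a.2 - b.2) (a.1 - b.1)

/-- Maximal monotonicity: monotone with no proper monotone extension. -/
def MaximallyMonotoneGraph (A : Set (X × StrongDual ℝ X)) : Prop :=
  MonotoneGraph A ∧ ∀ p : X × StrongDual ℝ X, (∀ b ∈ A, 0 ≤ (p.2 - b.2) (p.1 - b.1)) → p ∈ A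

/-- The Fitzpatrick function of `A`:
`F_A(x, x*) = sup_{(a,a*) ∈ A} (⟨x, a*⟩ + ⟨a, x*⟩ − ⟨a, a*⟩)`. -/
def fitzpatrick (A : Set (X × StrongDual ℝ X)) : X × StrongDual ℝ X → EReal :=
  fun z => ⨆ a ∈ A, (((a.2 z.1 + z.2 a.1 - a.2 a.1 : ℝ) : EReal))


/-! Off the graph, maximality produces `(a, a*) ∈ gra A` with `⟨x - a, x* - a*⟩ < 0`, i.e. with
`⟨x, x*⟩` strictly below the `(a, a*)`-term of the supremum defining `F_A`; on the graph,
monotonicity bounds every term by `⟨x, x*⟩`, while the term of `(x, x*)` itself equals it.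
Convexity holds for any graph: `F_A` is a supremum of affine functions. -/

open Set

lemma ConvexOn.erealConvexOn_coe {E : Type*} [AddCommGroup E] [Module ℝ E] {g : E → ℝ}
    (hg : ConvexOn ℝ univ g) : ERealConvexOn fun x => (g x : EReal) := by
  intro x y a b ha hb hab
  have := hg.2 (mem_univ x) (mem_univ y) ha hb hab
  simp only [smul_eq_mul] at this
  dsimp only
  exact_mod_cast this

lemma ERealConvexOn.biSup {E ι : Type*} [AddCommGroup E] [Module ℝ E] {s : Set ι}
    {f : ι → E → EReal} (hf : ∀ i ∈ s, ERealConvexOn (f i)) :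
    ERealConvexOn fun x => ⨆ i ∈ s, f i x := by
  intro x y a b ha hb hab
  refine iSup₂_le fun i hi => (hf i hi x y a b ha hb hab).trans ?_
  have ha' : (0 : EReal) ≤ a := by exact_mod_cast ha
  have hb' : (0 : EReal) ≤ b := by exact_mod_cast hb
  gcongr
  · exact le_iSup₂ (f := fun i (_ : i ∈ s) => f i x) i hi
  · exact le_iSup₂ (f := fun i (_ : i ∈ s) => f i y) i hi

lemma convexOn_fitzpatrickTerm (a : X × StrongDual ℝ X) :
    ConvexOn ℝ univ fun z : X × StrongDual ℝ X => a.2 z.1 + z.2 a.1 - a.2 a.1 := by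
  refine ⟨convex_univ, fun x _ y _ s t _ _ hst => le_of_eq ?_⟩
  simp only [Prod.fst_add, Prod.snd_add, Prod.smul_fst, Prod.smul_snd, map_add, map_smul,
    add_apply, smul_apply, smul_eq_mul]
  linear_combination a.2 a.1 * hst

lemma erealConvexOn_fitzpatrick (A : Set (X × StrongDual ℝ X)) : ERealConvexOn (fitzpatrick A) :=
  ERealConvexOn.biSup fun a _ => ConvexOn.erealConvexOn_coe (convexOn_fitzpatrickTerm a)

lemma sub_apply_sub_eq (f g : StrongDual ℝ X) (x y : X) :
    (f - g) (x - y) = f x - (g x + f y - g y) := by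
  simp only [map_sub, sub_apply]
  ring

section Graph

variable {A : Set (X × StrongDual ℝ X)}

lemma le_fitzpatrick {a : X × StrongDual ℝ X} (ha : a ∈ A) (z : X × StrongDual ℝ X) :
    ((a.2 z.1 + z.2 a.1 - a.2 a.1 : ℝ) : EReal) ≤ fitzpatrick A z :=
  le_iSup₂ (f := fun a (_ : a ∈ A) => ((a.2 z.1 + z.2 a.1 - a.2 a.1 : ℝ) : EReal)) a ha

lemma pairing_le_fitzpatrick_of_mem {z : X × StrongDual ℝ X} (hz : z ∈ A) :
    ((z.2 z.1 : ℝ) : EReal) ≤ fitzpatrick A z := by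
  simpa using le_fitzpatrick hz z

lemma MonotoneGraph.fitzpatrick_le_pairing_of_mem (hA : MonotoneGraph A)
    {z : X × StrongDual ℝ X} (hz : z ∈ A) : fitzpatrick A z ≤ ((z.2 z.1 : ℝ) : EReal) := by
  refine iSup₂_le fun a ha => ?_
  have := hA z hz a ha
  rw [sub_apply_sub_eq] at this
  exact_mod_cast sub_nonneg.1 this

lemma MaximallyMonotoneGraph.pairing_lt_fitzpatrick_of_notMem (hA : MaximallyMonotoneGraph A)
    {z : X × StrongDual ℝ X} (hz : z ∉ A) : ((z.2 z.1 : ℝ) : EReal) < fitzpatrick A z := by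
  obtain ⟨a, ha, hlt⟩ : ∃ a ∈ A, (z.2 - a.2) (z.1 - a.1) < 0 := by
    by_contra! h
    exact hz (hA.2 z h)
  rw [sub_apply_sub_eq, sub_neg] at hlt
  exact (EReal.coe_lt_coe_iff.2 hlt).trans_le (le_fitzpatrick ha z)

lemma MaximallyMonotoneGraph.pairing_le_fitzpatrick (hA : MaximallyMonotoneGraph A)
    (z : X × StrongDual ℝ X) : ((z.2 z.1 : ℝ) : EReal) ≤ fitzpatrick A z := by
  by_cases hz : z ∈ A
  · exact pairing_le_fitzpatrick_of_mem hz
  · exact (hA.pairing_lt_fitzpatrick_of_notMem hz).le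

lemma MaximallyMonotoneGraph.fitzpatrick_eq_pairing_iff (hA : MaximallyMonotoneGraph A)
    (z : X × StrongDual ℝ X) : fitzpatrick A z = ((z.2 z.1 : ℝ) : EReal) ↔ z ∈ A := by
  refine ⟨fun h => ?_, fun hz => ?_⟩
  · by_contra hz
    exact (hA.pairing_lt_fitzpatrick_of_notMem hz).ne' h
  · exact (hA.1.fitzpatrick_le_pairing_of_mem hz).antisymm (pairing_le_fitzpatrick_of_mem hz)

lemma MaximallyMonotoneGraph.nonempty (hA : MaximallyMonotoneGraph A) : A.Nonempty := by
  by_contra h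
  exact h ⟨0, hA.2 0 fun b hb => absurd ⟨b, hb⟩ h⟩

end Graph

/-- Fitzpatrick: for a maximally monotone `A`, `⟨x, x*⟩ ≤ F_A(x, x*)` with equality iff
`(x, x*) ∈ gra A`; moreover `F_A` is convex and proper. -/
theorem fitzpatrick_function_properties (A : Set (X × StrongDual ℝ X))
    (hA : MaximallyMonotoneGraph A) :
    (∀ z : X × StrongDual ℝ X, ((z.2 z.1 : ℝ) : EReal) ≤ fitzpatrick A z) ∧
    (∀ z : X × StrongDual ℝ X, fitzpatrick A z = ((z.2 z.1 : ℝ) : EReal) ↔ z ∈ A) ∧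
    ERealConvexOn (fitzpatrick A) ∧
    ((∃ z, fitzpatrick A z ≠ ⊤) ∧ ∀ z, fitzpatrick A z ≠ ⊥) := by
  obtain ⟨a, ha⟩ := hA.nonempty
  refine ⟨hA.pairing_le_fitzpatrick, hA.fitzpatrick_eq_pairing_iff, erealConvexOn_fitzpatrick A,
    ⟨a, ?_⟩, fun z => ?_⟩
  · rw [(hA.fitzpatrick_eq_pairing_iff a).2 ha]
    exact EReal.coe_ne_top _
  · exact ((EReal.bot_lt_coe _).trans_le (hA.pairing_le_fitzpatrick z)).ne'
end
end

section
/- (Local boundedness of monotone operators) Let A : X ⇉ X* be monotone with nonempty interior of its domain. Then A is locally bounded at every point x ∈ int dom A: there exist δ > 0 and K > 0 such that ‖y*‖ ≤ K whenever y* ∈ Ay and ‖y − x‖ ≤ δ. -/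
/-!
The support-type function `z ↦ sup {ψ (z - y) : (y, ψ) ∈ A, y near x}` is a supremum of
continuous affine functions, and monotonicity makes it finite wherever `A` has a value.
By Baire's theorem it is bounded above on some small ball; as its sublevel sets are convex,
reflecting that ball through `x` gives a bound on a ball around `x`. An affine function
`z ↦ ψ (z - y)` bounded above on a ball around its base point `y` has bounded slope `‖ψ‖`.
-/

noncomputable section
open NormedSpace

variable {X : Type*} [NormedAddCommGroup X] [NormedSpace ℝ X]

open Metric Set

theorem IsOpen.exists_isOpen_nonempty_forall_le {E ι : Type*} [TopologicalSpace E] [BaireSpace E]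
    {U : Set E} (hU : IsOpen U) (hne : U.Nonempty) {f : ι → E → ℝ} (hf : ∀ i, Continuous (f i))
    (hbdd : ∀ z ∈ U, ∃ C, ∀ i, f i z ≤ C) :
    ∃ V ⊆ U, IsOpen V ∧ V.Nonempty ∧ ∃ M, ∀ z ∈ V, ∀ i, f i z ≤ M := by
  have := hU.baireSpace
  have := hne.to_subtype
  let F : ℕ → Set U := fun n => {z | ∀ i, f i z ≤ n}
  have hF : ∀ n, IsClosed (F n) := fun n => by
    simp only [F, Set.ofPred_forall]
    exact isClosed_iInter fun i => isClosed_le ((hf i).comp continuous_subtype_val) continuous_const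
  have hcover : ⋃ n, F n = univ := by
    refine eq_univ_of_forall fun z => mem_iUnion.2 ?_
    obtain ⟨C, hC⟩ := hbdd z z.2
    obtain ⟨n, hn⟩ := exists_nat_ge C
    exact ⟨n, fun i => (hC i).trans hn⟩
  obtain ⟨n, hn⟩ := nonempty_interior_of_iUnion_of_closed hF hcover
  refine ⟨(↑) '' interior (F n), by simp, hU.isOpenMap_subtype_val _ isOpen_interior,
    hn.image _, n, ?_⟩
  rintro _ ⟨z, hz, rfl⟩
  exact interior_subset hz

theorem Convex.ball_midpoint_subset {s : Set X} (hs : Convex ℝ s) {p z : X} {ε : ℝ}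
    (hp : p ∈ s) (hz : ball z ε ⊆ s) : ball (midpoint ℝ p z) (ε / 2) ⊆ s := by
  intro w hw
  have hv : Equiv.pointReflection w p ∈ ball z ε := by
    have : Equiv.pointReflection w p - z = (2 : ℝ) • (w - midpoint ℝ p z) := by
      rw [Equiv.pointReflection_apply, vsub_eq_sub, vadd_eq_add, midpoint_eq_smul_add,
        invOf_eq_inv]
      module
    rw [mem_ball, dist_eq_norm, this, norm_smul, ← dist_eq_norm]
    rw [mem_ball] at hw
    norm_num
    linarith
  simpa using hs.midpoint_mem hp (hz hv)

theorem convex_setOf_forall_apply_sub_le (F : Set (X × StrongDual ℝ X)) (M : ℝ) :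
    Convex ℝ {z | ∀ p ∈ F, p.2 (z - p.1) ≤ M} := by
  simp only [Set.ofPred_forall]
  refine convex_iInter₂ fun p _ => ?_
  simp only [map_sub, sub_le_iff_le_add]
  exact convex_halfSpace_le p.2.isLinear _

theorem exists_ball_forall_apply_sub_le [CompleteSpace X] {F : Set (X × StrongDual ℝ X)} {x : X}
    {r : ℝ} (hr : 0 < r) (hF : ∀ z ∈ ball x r, ∃ C, ∀ p ∈ F, p.2 (z - p.1) ≤ C) :
    ∃ η > 0, ∃ M, ∀ p ∈ F, ∀ z ∈ ball x η, p.2 (z - p.1) ≤ M := by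
  obtain ⟨V, hVr, hVo, ⟨z₁, hz₁⟩, M, hM⟩ :=
    isOpen_ball.exists_isOpen_nonempty_forall_le (nonempty_ball.2 hr)
      (f := fun p : F => fun z => p.1.2 (z - p.1.1)) (fun p => by fun_prop)
      fun z hz => (hF z hz).imp fun _ hC p => hC p p.2
  obtain ⟨ε, hε, hεV⟩ := Metric.isOpen_iff.1 hVo z₁ hz₁
  obtain ⟨c, hc⟩ := hF (Equiv.pointReflection x z₁) <| by
    rw [mem_ball, Equiv.pointReflection_apply, vsub_eq_sub, vadd_eq_add, dist_eq_norm,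
      add_sub_cancel_right, ← dist_eq_norm']
    exact hVr hz₁
  have hsub : ball x (ε / 2) ⊆ {z | ∀ p ∈ F, p.2 (z - p.1) ≤ max M c} := by
    simpa using (convex_setOf_forall_apply_sub_le F (max M c)).ball_midpoint_subset
      (fun p hp => (hc p hp).trans (le_max_right _ _))
      (fun z hz p hp => (hM z (hεV hz) ⟨p, hp⟩).trans (le_max_left _ _))
  exact ⟨ε / 2, by positivity, max M c, fun p hp z hz => hsub hz p hp⟩

theorem MonotoneGraph.apply_sub_le {A : Set (X × StrongDual ℝ X)} (hA : MonotoneGraph A)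
    {y z : X} {φ ψ : StrongDual ℝ X} (hz : (z, φ) ∈ A) (hy : (y, ψ) ∈ A) :
    ψ (z - y) ≤ φ (z - y) := by
  have := hA _ hz _ hy
  simp only [sub_apply] at this
  linarith

theorem ContinuousLinearMap.opNorm_le_of_forall_closedBall_apply_le (ψ : StrongDual ℝ X)
    {δ M : ℝ} (hδ : 0 < δ) (h : ∀ w ∈ closedBall (0 : X) δ, ψ w ≤ M) : ‖ψ‖ ≤ M / δ := by
  refine ψ.opNorm_bound_of_ball_bound hδ M fun w hw => abs_le.2 ⟨?_, h w hw⟩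
  have := h (-w) (by simpa using hw)
  rw [map_neg] at this
  linarith

/-- Local boundedness of monotone operators: a monotone operator on a Banach space is
locally bounded at every interior point of its domain. -/
theorem monotone_locally_bounded [CompleteSpace X] (A : Set (X × StrongDual ℝ X))
    (hA : MonotoneGraph A) (x : X) (hx : x ∈ interior {y : X | ∃ φ, (y, φ) ∈ A}) :
    ∃ δ > (0 : ℝ), ∃ K > (0 : ℝ), ∀ y : X, ∀ ψ : StrongDual ℝ X,
      (y, ψ) ∈ A → ‖y - x‖ ≤ δ → ‖ψ‖ ≤ K := by
  obtain ⟨r, hr, hrA⟩ := Metric.mem_nhds_iff.1 (mem_interior_iff_mem_nhds.1 hx)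
  obtain ⟨η, hη, M, hM⟩ := exists_ball_forall_apply_sub_le (F := {p ∈ A | p.1 ∈ ball x r}) hr
    fun z hz => by
      obtain ⟨φ, hφ⟩ := hrA hz
      refine ⟨‖φ‖ * (2 * r), fun p ⟨hpA, hpr⟩ => ?_⟩
      calc p.2 (z - p.1) ≤ φ (z - p.1) := hA.apply_sub_le hφ hpA
        _ ≤ ‖φ‖ * ‖z - p.1‖ := (le_abs_self _).trans (φ.le_opNorm _)
        _ ≤ ‖φ‖ * (2 * r) := by
          rw [← dist_eq_norm]
          have := dist_triangle_right z p.1 x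
          gcongr
          linarith [mem_ball.1 hz, mem_ball.1 hpr]
  set δ := min (r / 2) (η / 3)
  have hδ : 0 < δ := by positivity
  refine ⟨δ, hδ, max (M / δ) 1, by positivity, fun y ψ hy hyx => ?_⟩
  refine le_max_of_le_left (ψ.opNorm_le_of_forall_closedBall_apply_le hδ fun w hw => ?_)
  rw [mem_closedBall, dist_zero_right] at hw
  have hyr : y ∈ ball x r := by
    rw [mem_ball, dist_eq_norm]
    linarith [min_le_left (r / 2) (η / 3)]
  have hwη : y + w ∈ ball x η := by
    rw [mem_ball, dist_eq_norm, add_sub_right_comm]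
    linarith [norm_add_le (y - x) w, min_le_right (r / 2) (η / 3)]
  simpa using hM (y, ψ) ⟨hy, hyr⟩ (y + w) hwη
end
end
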